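/- arXiv:2309.16604 — 3 statements merged into one kernel-verified Lean document; each statement's English description precedes it below -/
import Mathlib

section
/- Lower semicontinuity of the FNGW cost functional: given two network tuples g_X = (X, ψ_X, φ_X, ω_X, μ_X) and g_Y = (Y, ψ_Y, φ_Y, ω_Y, μ_Y), for any p, q ∈ [1, ∞) and (α, β) ∈ [0,1]², the functional μ ↦ E_{α,β,q,p}(g_X, g_Y, μ) is lower semicontinuous on Π(μ_X, μ_Y) with respect to the topology of weak convergence of probability measures on X × Y. -/
open MeasureTheory

/-- The set of couplings of two probability measures: Borel probability measures on the
product whose marginals are the given measures. -/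
def couplings {X Y : Type*} [MeasurableSpace X] [MeasurableSpace Y]
    (μX : Measure X) (μY : Measure Y) : Set (Measure (X × Y)) :=
  {μ | IsProbabilityMeasure μ ∧ μ.map Prod.fst = μX ∧ μ.map Prod.snd = μY}

/-- The FNGW cost functional `E_{α,β,q,p}(g_X, g_Y, μ)`. -/
noncomputable def fngwCost {X Y Ψ Ω : Type*} [MeasurableSpace X] [MeasurableSpace Y]
    [MetricSpace Ψ] [MetricSpace Ω]
    (α β q p : ℝ)
    (ψX : X → Ψ) (φX : X × X → ℝ) (ωX : X × X → Ω)
    (ψY : Y → Ψ) (φY : Y × Y → ℝ) (ωY : Y × Y → Ω)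
    (μ : Measure (X × Y)) : ℝ :=
  (∫ w : (X × Y) × (X × Y),
      ((1 - α - β) * dist (ψX w.1.1) (ψY w.1.2) ^ q
        + α * dist (ωX (w.1.1, w.2.1)) (ωY (w.1.2, w.2.2)) ^ q
        + β * |φX (w.1.1, w.2.1) - φY (w.1.2, w.2.2)| ^ q) ^ p
      ∂(μ.prod μ)) ^ (1 / p)

/-- The Fused Network Gromov–Wasserstein distance: infimum of the cost over couplings. -/
noncomputable def FNGW {X Y Ψ Ω : Type*} [MeasurableSpace X] [MeasurableSpace Y]
    [MetricSpace Ψ] [MetricSpace Ω]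
    (α β q p : ℝ)
    (ψX : X → Ψ) (φX : X × X → ℝ) (ωX : X × X → Ω)
    (ψY : Y → Ψ) (φY : Y × Y → ℝ) (ωY : Y × Y → Ω)
    (μX : Measure X) (μY : Measure Y) : ℝ :=
  sInf ((fngwCost α β q p ψX φX ωX ψY φY ωY) '' couplings μX μY)

/-!
The cost is in fact continuous on all of the space of probability measures on `X × Y`. Its
integrand is a continuous function of the three discrepancies `d_Ψ`, `d_Ω`, `|φ_X - φ_Y|`, which
are bounded, so it is a bounded continuous function on `(X × Y)²`; and `ν ↦ ν ⊗ ν` is weakly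
continuous, so `ν ↦ ∫ G d(ν ⊗ ν)` is continuous for every bounded continuous `G`.
-/

open Set Bornology TopologicalSpace
open scoped BoundedContinuousFunction

namespace MeasureTheory.ProbabilityMeasure

theorem continuous_integral_prod_self {S : Type*} [TopologicalSpace S]
    [SecondCountableTopology S] [PseudoMetrizableSpace S]
    [MeasurableSpace S] [OpensMeasurableSpace S]
    {G : S × S → ℝ} (hG : Continuous G) (hGb : IsBounded (range G)) :
    Continuous fun ν : ProbabilityMeasure S => ∫ w, G w ∂(ν : Measure S).prod ν := by
  obtain ⟨C, hC⟩ := Metric.isBounded_iff.mp hGb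
  let Gb : S × S →ᵇ ℝ :=
    .mkOfBound ⟨G, hG⟩ C fun w w' => hC (mem_range_self w) (mem_range_self w')
  exact (continuous_integral_boundedContinuousFunction Gb).comp
    (continuous_prod.comp (continuous_id.prodMk continuous_id))

end MeasureTheory.ProbabilityMeasure

theorem exists_dist_le_of_isBounded_range {α β M : Type*} [PseudoMetricSpace M]
    {f : α → M} {g : β → M} (hf : IsBounded (range f)) (hg : IsBounded (range g)) :
    ∃ C, ∀ a b, dist (f a) (g b) ≤ C := by
  obtain ⟨C, hC⟩ := Metric.isBounded_iff.mp (hf.union hg)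
  exact ⟨C, fun a b => hC (Or.inl (mem_range_self a)) (Or.inr (mem_range_self b))⟩

/-- The integrand of `fngwCost`, as a function of the triple of discrepancies. -/
noncomputable def fusedCost (α β q p : ℝ) (t : ℝ × ℝ × ℝ) : ℝ :=
  ((1 - α - β) * t.1 ^ q + α * t.2.1 ^ q + β * t.2.2 ^ q) ^ p

theorem continuous_fusedCost (α β : ℝ) {q p : ℝ} (hq : 0 ≤ q) (hp : 0 ≤ p) :
    Continuous (fusedCost α β q p) := by
  have hpow_q := Real.continuous_rpow_const hq
  unfold fusedCost
  fun_prop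

theorem continuous_fngwCost {X Y Ψ Ω : Type*}
    [TopologicalSpace X] [SecondCountableTopology X] [PseudoMetrizableSpace X]
    [MeasurableSpace X] [OpensMeasurableSpace X]
    [TopologicalSpace Y] [SecondCountableTopology Y] [PseudoMetrizableSpace Y]
    [MeasurableSpace Y] [OpensMeasurableSpace Y]
    [MetricSpace Ψ] [MetricSpace Ω]
    {ψX : X → Ψ} {φX : X × X → ℝ} {ωX : X × X → Ω}
    {ψY : Y → Ψ} {φY : Y × Y → ℝ} {ωY : Y × Y → Ω}
    (hψX : Continuous ψX) (hψXb : IsBounded (range ψX))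
    (hφX : Continuous φX) (hφXb : IsBounded (range φX))
    (hωX : Continuous ωX) (hωXb : IsBounded (range ωX))
    (hψY : Continuous ψY) (hψYb : IsBounded (range ψY))
    (hφY : Continuous φY) (hφYb : IsBounded (range φY))
    (hωY : Continuous ωY) (hωYb : IsBounded (range ωY))
    (α β : ℝ) {p q : ℝ} (hp : 0 ≤ p) (hq : 0 ≤ q) :
    Continuous fun μ : ProbabilityMeasure (X × Y) =>
      fngwCost α β q p ψX φX ωX ψY φY ωY (μ : Measure (X × Y)) := by
  let D : (X × Y) × (X × Y) → ℝ × ℝ × ℝ := fun w =>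
    (dist (ψX w.1.1) (ψY w.1.2), dist (ωX (w.1.1, w.2.1)) (ωY (w.1.2, w.2.2)),
      |φX (w.1.1, w.2.1) - φY (w.1.2, w.2.2)|)
  have hD : Continuous D := by fun_prop
  obtain ⟨Cψ, hCψ⟩ := exists_dist_le_of_isBounded_range hψXb hψYb
  obtain ⟨Cω, hCω⟩ := exists_dist_le_of_isBounded_range hωXb hωYb
  obtain ⟨Cφ, hCφ⟩ := exists_dist_le_of_isBounded_range hφXb hφYb
  have hK : IsCompact (Icc 0 Cψ ×ˢ Icc 0 Cω ×ˢ Icc 0 Cφ) :=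
    isCompact_Icc.prod (isCompact_Icc.prod isCompact_Icc)
  have hDK : ∀ w, D w ∈ Icc 0 Cψ ×ˢ Icc 0 Cω ×ˢ Icc 0 Cφ := fun w =>
    ⟨⟨dist_nonneg, hCψ _ _⟩, ⟨dist_nonneg, hCω _ _⟩, ⟨abs_nonneg _, hCφ _ _⟩⟩
  have hG := continuous_fusedCost α β hq hp
  have hGb : IsBounded (range (fusedCost α β q p ∘ D)) :=
    (hK.image hG).isBounded.subset (range_subset_iff.2 fun w => mem_image_of_mem _ (hDK w))
  exact (ProbabilityMeasure.continuous_integral_prod_self (hG.comp hD) hGb).rpow_const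
    fun _ => Or.inr (by positivity)

theorem fngw_cost_lowerSemicontinuousOn_general
    {X Y Ψ Ω : Type*}
    [MeasurableSpace X] [TopologicalSpace X] [PolishSpace X] [BorelSpace X]
    [MeasurableSpace Y] [TopologicalSpace Y] [PolishSpace Y] [BorelSpace Y]
    [MetricSpace Ψ] [MetricSpace Ω]
    (ψX : X → Ψ) (φX : X × X → ℝ) (ωX : X × X → Ω)
    (ψY : Y → Ψ) (φY : Y × Y → ℝ) (ωY : Y × Y → Ω)
    (μX : Measure X) (μY : Measure Y)
    (hψX : Continuous ψX) (hψXb : Bornology.IsBounded (Set.range ψX))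
    (hφX : Continuous φX) (hφXb : Bornology.IsBounded (Set.range φX))
    (hωX : Continuous ωX) (hωXb : Bornology.IsBounded (Set.range ωX))
    (hψY : Continuous ψY) (hψYb : Bornology.IsBounded (Set.range ψY))
    (hφY : Continuous φY) (hφYb : Bornology.IsBounded (Set.range φY))
    (hωY : Continuous ωY) (hωYb : Bornology.IsBounded (Set.range ωY))
    (p q α β : ℝ) (hp : 1 ≤ p) (hq : 1 ≤ q) :
    LowerSemicontinuousOn
      (fun μ : ProbabilityMeasure (X × Y) =>
        fngwCost α β q p ψX φX ωX ψY φY ωY (μ : Measure (X × Y)))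
      {μ : ProbabilityMeasure (X × Y) | (μ : Measure (X × Y)) ∈ couplings μX μY} :=
  (continuous_fngwCost hψX hψXb hφX hφXb hωX hωXb hψY hψYb hφY hφYb hωY hωYb α β
    (zero_le_one.trans hp) (zero_le_one.trans hq)).lowerSemicontinuous.lowerSemicontinuousOn _

/-- **Lower semicontinuity of the FNGW cost functional** on the set of couplings,
with respect to the topology of weak convergence of probability measures. -/
theorem fngw_cost_lowerSemicontinuousOn
    {X Y Ψ Ω : Type*}
    [MeasurableSpace X] [TopologicalSpace X] [PolishSpace X] [BorelSpace X]
    [MeasurableSpace Y] [TopologicalSpace Y] [PolishSpace Y] [BorelSpace Y]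
    [MetricSpace Ψ] [MetricSpace Ω]
    (ψX : X → Ψ) (φX : X × X → ℝ) (ωX : X × X → Ω)
    (ψY : Y → Ψ) (φY : Y × Y → ℝ) (ωY : Y × Y → Ω)
    (μX : Measure X) (μY : Measure Y)
    [IsProbabilityMeasure μX] [IsProbabilityMeasure μY]
    [μX.IsOpenPosMeasure] [μY.IsOpenPosMeasure]
    (hψX : Continuous ψX) (hψXb : Bornology.IsBounded (Set.range ψX))
    (hφX : Continuous φX) (hφXb : Bornology.IsBounded (Set.range φX))
    (hωX : Continuous ωX) (hωXb : Bornology.IsBounded (Set.range ωX))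
    (hψY : Continuous ψY) (hψYb : Bornology.IsBounded (Set.range ψY))
    (hφY : Continuous φY) (hφYb : Bornology.IsBounded (Set.range φY))
    (hωY : Continuous ωY) (hωYb : Bornology.IsBounded (Set.range ωY))
    (p q α β : ℝ) (hp : 1 ≤ p) (hq : 1 ≤ q)
    (hα : α ∈ Set.Icc (0 : ℝ) 1) (hβ : β ∈ Set.Icc (0 : ℝ) 1) :
    LowerSemicontinuousOn
      (fun μ : ProbabilityMeasure (X × Y) =>
        fngwCost α β q p ψX φX ωX ψY φY ωY (μ : Measure (X × Y)))
      {μ : ProbabilityMeasure (X × Y) | (μ : Measure (X × Y)) ∈ couplings μX μY} :=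
  fngw_cost_lowerSemicontinuousOn_general ψX φX ωX ψY φY ωY μX μY hψX hψXb hφX hφXb hωX hωXb hψY
    hψYb hφY hφYb hωY hωYb p q α β hp hq
end

section
/- Efficient computation of the edge-feature tensor contraction: let E ∈ ℝ^{n×n×T}, Ẽ ∈ ℝ^{m×m×T}, let p ∈ Σ_n, p̃ ∈ Σ_m be histograms, and let π ∈ Π(p, p̃). Then for all indices i, j: (L(E, Ẽ) ⊗ π)_{i,j} = ( g(E) p 𝟙_m^T + 𝟙_n p̃^T h(Ẽ)^T − 2 Σ_{t=1}^{T} E[t] π Ẽ[t]^T )_{i,j}, where g(E) ∈ ℝ^{n×n} is defined by g(E)_{i,k} = ‖E(i,k,·)‖²_{ℝ^T}, h(Ẽ) ∈ ℝ^{m×m} is defined by h(Ẽ)_{j,l} = ‖Ẽ(j,l,·)‖²_{ℝ^T}, 𝟙_n denotes the all-ones vector in ℝ^n, and E[t] denotes the matrix E[t](i,k) = E(i,k,t). -/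
/-- **Efficient computation of the edge-feature tensor contraction**: the `(i,j)` entry of
`L(E, Ẽ) ⊗ π` equals the `(i,j)` entry of
`g(E) p 𝟙_m^T + 𝟙_n p̃^T h(Ẽ)^T − 2 Σ_t E[t] π Ẽ[t]^T`. -/
theorem fngw_edge_tensor_contraction
    (n m T : ℕ)
    (E : Fin n → Fin n → Fin T → ℝ) (E' : Fin m → Fin m → Fin T → ℝ)
    (p : Fin n → ℝ) (p' : Fin m → ℝ)
    (hp0 : ∀ i, 0 ≤ p i) (hp1 : ∑ i, p i = 1)
    (hp'0 : ∀ j, 0 ≤ p' j) (hp'1 : ∑ j, p' j = 1)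
    (π : Fin n → Fin m → ℝ)
    (hπ0 : ∀ k l, 0 ≤ π k l)
    (hπrow : ∀ k, ∑ l, π k l = p k)
    (hπcol : ∀ l, ∑ k, π k l = p' l) :
    ∀ (i : Fin n) (j : Fin m),
      (∑ k, ∑ l, (∑ t, (E i k t - E' j l t) ^ 2) * π k l)
        = (∑ k, (∑ t, (E i k t) ^ 2) * p k)
          + (∑ l, p' l * (∑ t, (E' j l t) ^ 2))
          - 2 * ∑ t, ∑ k, ∑ l, E i k t * π k l * E' j l t := by
  intro i j
  have key : ∀ (k : Fin n) (l : Fin m),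
      (∑ t, (E i k t - E' j l t) ^ 2) * π k l
        = (∑ t, (E i k t) ^ 2) * π k l + (∑ t, (E' j l t) ^ 2) * π k l
          - ∑ t, 2 * (E i k t * π k l * E' j l t) := by
    intro k l
    rw [Finset.sum_mul, Finset.sum_mul, Finset.sum_mul,
      ← Finset.sum_add_distrib, ← Finset.sum_sub_distrib]
    exact Finset.sum_congr rfl fun t _ => by ring
  simp only [key, Finset.sum_sub_distrib, Finset.sum_add_distrib]
  have hA : (∑ k, ∑ l, (∑ t, (E i k t) ^ 2) * π k l)
      = ∑ k, (∑ t, (E i k t) ^ 2) * p k := by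
    refine Finset.sum_congr rfl fun k _ => ?_
    rw [← Finset.mul_sum, hπrow]
  have hB : (∑ k, ∑ l, (∑ t, (E' j l t) ^ 2) * π k l)
      = ∑ l, p' l * (∑ t, (E' j l t) ^ 2) := by
    rw [Finset.sum_comm]
    refine Finset.sum_congr rfl fun l _ => ?_
    rw [← Finset.mul_sum, hπcol, mul_comm]
  have hC : (∑ k, ∑ l, ∑ t, 2 * (E i k t * π k l * E' j l t))
      = 2 * ∑ t, ∑ k, ∑ l, E i k t * π k l * E' j l t := by
    rw [Finset.mul_sum]
    rw [show (∑ t : Fin T, 2 * ∑ k, ∑ l, E i k t * π k l * E' j l t)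
        = ∑ t : Fin T, ∑ k, ∑ l, 2 * (E i k t * π k l * E' j l t) by
      simp [Finset.mul_sum]]
    rw [show (∑ k : Fin n, ∑ l : Fin m, ∑ t : Fin T, 2 * (E i k t * π k l * E' j l t))
        = ∑ k : Fin n, ∑ t : Fin T, ∑ l : Fin m, 2 * (E i k t * π k l * E' j l t) from
      Finset.sum_congr rfl fun k _ => Finset.sum_comm]
    exact Finset.sum_comm
  rw [hA, hB, hC]
end

section
/- Closed-form solution of the barycenter problem in the edge-feature tensor: let n, T ≥ 1, let p ∈ Σ_n be a histogram with p_i > 0 for all i, let K ≥ 1, let λ ∈ Σ_K be barycenter weights, and for each k = 1, …, K let p_k ∈ Σ_{n_k} be a histogram, E_k ∈ ℝ^{n_k×n_k×T} a tensor, and π_k ∈ Π(p, p_k) a coupling. Then the tensor E* ∈ ℝ^{n×n×T} defined by E*(i, j, t) = (1 / (p_i p_j)) Σ_k λ_k Σ_{s,r} π_k(i, s) E_k(s, r, t) π_k(j, r) is a global minimizer over E ∈ ℝ^{n×n×T} of the functional F(E) = Σ_k λ_k Σ_{i, j, i', j', t} ( E(i, i', t) − E_k(j, j', t) )² π_k(i,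 j) π_k(i', j'). -/
lemma fngw_expand_inner {m : ℕ} (x : ℝ) (E : Fin m → Fin m → ℝ) (u v : Fin m → ℝ) :
    ∑ j, ∑ j', (x - E j j')^2 * u j * v j'
      = x^2 * ((∑ j, u j) * (∑ j', v j'))
        - 2*x*(∑ j, ∑ j', u j * E j j' * v j')
        + ∑ j, ∑ j', (E j j')^2 * u j * v j' := by
  have h : ∀ j j', (x - E j j')^2 * u j * v j'
      = x^2 * (u j * v j') - 2*x*(u j * E j j' * v j') + (E j j')^2 * u j * v j' :=
    fun j j' => by ring
  simp only [h, Finset.sum_add_distrib, Finset.sum_sub_distrib, ← Finset.mul_sum,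
    Finset.sum_mul_sum]

lemma fngw_key_quad {K : ℕ} (nk : Fin K → ℕ) (lam : Fin K → ℝ) (hlam1 : ∑ k, lam k = 1)
    (a b : ℝ) (ha : 0 < a) (hb : 0 < b)
    (Eki : (k : Fin K) → Fin (nk k) → Fin (nk k) → ℝ)
    (u v : (k : Fin K) → Fin (nk k) → ℝ)
    (hu : ∀ k, ∑ j, u k j = a) (hv : ∀ k, ∑ j, v k j = b) (x : ℝ) :
    ∑ k, ∑ j, ∑ j', lam k *
        (((1/(a*b)) * ∑ k', lam k' * ∑ s, ∑ r, u k' s * Eki k' s r * v k' r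
            - Eki k j j')^2 * u k j * v k j')
      ≤ ∑ k, ∑ j, ∑ j', lam k * ((x - Eki k j j')^2 * u k j * v k j') := by
  set B : ℝ := ∑ k', lam k' * ∑ s, ∑ r, u k' s * Eki k' s r * v k' r with hB
  set C : ℝ := ∑ k, lam k * ∑ j, ∑ j', (Eki k j j')^2 * u k j * v k j' with hC
  have hG : ∀ y : ℝ, ∑ k, ∑ j, ∑ j', lam k * ((y - Eki k j j')^2 * u k j * v k j')
      = (a*b)*y^2 - 2*y*B + C := by
    intro y
    have hk : ∀ k : Fin K, ∑ j, ∑ j', lam k * ((y - Eki k j j')^2 * u k j * v k j')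
        = lam k * (a*b) * y^2
          - 2*y*(lam k * ∑ s, ∑ r, u k s * Eki k s r * v k r)
          + lam k * ∑ j, ∑ j', (Eki k j j')^2 * u k j * v k j' := by
      intro k
      have h1 : ∑ j, ∑ j', lam k * ((y - Eki k j j')^2 * u k j * v k j')
          = lam k * ∑ j, ∑ j', (y - Eki k j j')^2 * u k j * v k j' := by
        simp only [Finset.mul_sum]
      rw [h1, fngw_expand_inner y (Eki k) (u k) (v k), hu k, hv k]
      ring
    calc ∑ k, ∑ j, ∑ j', lam k * ((y - Eki k j j')^2 * u k j * v k j')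
        = ∑ k, (lam k * (a*b) * y^2
            - 2*y*(lam k * ∑ s, ∑ r, u k s * Eki k s r * v k r)
            + lam k * ∑ j, ∑ j', (Eki k j j')^2 * u k j * v k j') :=
          Finset.sum_congr rfl fun k _ => hk k
      _ = (∑ k, lam k) * (a*b) * y^2 - 2*y*B + C := by
          rw [Finset.sum_add_distrib, Finset.sum_sub_distrib, ← Finset.mul_sum,
            ← Finset.sum_mul, ← Finset.sum_mul, hB, hC]
      _ = (a*b)*y^2 - 2*y*B + C := by rw [hlam1]; ring
  rw [hG, hG]
  rw [← sub_nonneg]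
  have hab : (0:ℝ) < a*b := mul_pos ha hb
  have key : (a*b)*x^2 - 2*x*B + C - ((a*b)*((1/(a*b))*B)^2 - 2*((1/(a*b))*B)*B + C)
      = ((a*b)*x - B)^2 / (a*b) := by
    field_simp
    ring
  rw [key]
  positivity

lemma fngw_swap_sums {K n T : ℕ} (nk : Fin K → ℕ)
    (f : (k : Fin K) → Fin n → Fin n → Fin (nk k) → Fin (nk k) → Fin T → ℝ) :
    ∑ k, ∑ i, ∑ i', ∑ j, ∑ j', ∑ t, f k i i' j j' t
      = ∑ i, ∑ i', ∑ t, ∑ k, ∑ j, ∑ j', f k i i' j j' t := by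
  rw [Finset.sum_comm]
  refine Finset.sum_congr rfl fun i _ => ?_
  rw [Finset.sum_comm]
  refine Finset.sum_congr rfl fun i' _ => ?_
  calc ∑ k, ∑ j, ∑ j', ∑ t, f k i i' j j' t
      = ∑ k, ∑ t, ∑ j, ∑ j', f k i i' j j' t :=
        Finset.sum_congr rfl fun k _ =>
          (Finset.sum_congr rfl fun j _ => Finset.sum_comm).trans Finset.sum_comm
    _ = ∑ t, ∑ k, ∑ j, ∑ j', f k i i' j j' t := Finset.sum_comm

/-- **Closed-form solution of the FNGW barycenter problem in the edge-feature tensor**: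
the tensor `E*(i,j,t) = (1/(p_i p_j)) Σ_k λ_k Σ_{s,r} π_k(i,s) E_k(s,r,t) π_k(j,r)` is a
global minimizer of the edge-feature part of the weighted sum of discrete FNGW costs. -/
theorem fngw_barycenter_edge_closed_form
    (n T K : ℕ) (hn : 1 ≤ n) (hT : 1 ≤ T) (hK : 1 ≤ K)
    (p : Fin n → ℝ) (hp0 : ∀ i, 0 < p i) (hp1 : ∑ i, p i = 1)
    (lam : Fin K → ℝ) (hlam0 : ∀ k, 0 ≤ lam k) (hlam1 : ∑ k, lam k = 1)
    (nk : Fin K → ℕ)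
    (pk : (k : Fin K) → Fin (nk k) → ℝ)
    (hpk0 : ∀ k j, 0 ≤ pk k j) (hpk1 : ∀ k, ∑ j, pk k j = 1)
    (Ek : (k : Fin K) → Fin (nk k) → Fin (nk k) → Fin T → ℝ)
    (πk : (k : Fin K) → Fin n → Fin (nk k) → ℝ)
    (hπ0 : ∀ k i j, 0 ≤ πk k i j)
    (hπrow : ∀ k i, ∑ j, πk k i j = p i)
    (hπcol : ∀ k j, ∑ i, πk k i j = pk k j) :
    ∀ E : Fin n → Fin n → Fin T → ℝ,
      (∑ k, lam k * ∑ i, ∑ i', ∑ j, ∑ j', ∑ t,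
          (((1 / (p i * p i')) * ∑ k', lam k' * ∑ s, ∑ r,
              πk k' i s * Ek k' s r t * πk k' i' r)
            - Ek k j j' t) ^ 2 * πk k i j * πk k i' j')
        ≤ ∑ k, lam k * ∑ i, ∑ i', ∑ j, ∑ j', ∑ t,
            (E i i' t - Ek k j j' t) ^ 2 * πk k i j * πk k i' j' := by
  intro E
  have L : (∑ k, lam k * ∑ i, ∑ i', ∑ j, ∑ j', ∑ t,
          (((1 / (p i * p i')) * ∑ k', lam k' * ∑ s, ∑ r,
              πk k' i s * Ek k' s r t * πk k' i' r)
            - Ek k j j' t) ^ 2 * πk k i j * πk k i' j')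
      = ∑ i, ∑ i', ∑ t, ∑ k, ∑ j, ∑ j',
          lam k * ((((1 / (p i * p i')) * ∑ k', lam k' * ∑ s, ∑ r,
              πk k' i s * Ek k' s r t * πk k' i' r)
            - Ek k j j' t) ^ 2 * πk k i j * πk k i' j') := by
    rw [← fngw_swap_sums nk (fun k i i' j j' t =>
      lam k * ((((1 / (p i * p i')) * ∑ k', lam k' * ∑ s, ∑ r,
          πk k' i s * Ek k' s r t * πk k' i' r)
        - Ek k j j' t) ^ 2 * πk k i j * πk k i' j'))]
    refine Finset.sum_congr rfl fun k _ => ?_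
    simp only [Finset.mul_sum]
  have R : (∑ k, lam k * ∑ i, ∑ i', ∑ j, ∑ j', ∑ t,
          (E i i' t - Ek k j j' t) ^ 2 * πk k i j * πk k i' j')
      = ∑ i, ∑ i', ∑ t, ∑ k, ∑ j, ∑ j',
          lam k * ((E i i' t - Ek k j j' t) ^ 2 * πk k i j * πk k i' j') := by
    rw [← fngw_swap_sums nk (fun k i i' j j' t =>
      lam k * ((E i i' t - Ek k j j' t) ^ 2 * πk k i j * πk k i' j'))]
    refine Finset.sum_congr rfl fun k _ => ?_
    simp only [Finset.mul_sum]
  rw [L, R]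
  refine Finset.sum_le_sum fun i _ => ?_
  refine Finset.sum_le_sum fun i' _ => ?_
  refine Finset.sum_le_sum fun t _ => ?_
  exact fngw_key_quad nk lam hlam1 (p i) (p i') (hp0 i) (hp0 i')
    (fun k s r => Ek k s r t) (fun k j => πk k i j) (fun k j => πk k i' j)
    (fun k => hπrow k i) (fun k => hπrow k i') (E i i' t)
end
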